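/- arXiv:2212.13801 — 6 statements merged into one kernel-verified Lean document; each statement's English description precedes it below -/
import Mathlib

section
/- If a language L over a finite alphabet Σ is verified by an MA-DFA with m states, then there exist k ≤ m and a k-entry DFA with the same m states that recognizes L; that is, there is a transition function on the same state set, an accepting set, and a set S_I of start states with |S_I| = k ≤ m such that L is exactly the set of strings x for which the run on x from some state of S_I ends in an accepting state. -/
/-- If a language `L` over a finite alphabet is verified by an MA-DFA with `m`
states, then there exist `k ≤ m` and a `k`-entry DFA on the same `m` states recognizing `L`. -/
theorem madfa_to_kentry_dfa {α γ : Type} [Fintype α] [Fintype γ] {m : ℕ}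
    (δ : Fin m → γ ⊕ α → Fin m) (q0 : Fin m) (F : Finset (Fin m))
    (L : Set (List α))
    (hmem : ∀ x ∈ L, ∃ c : List γ,
      x.foldl (fun q s => δ q (Sum.inr s)) (c.foldl (fun q s => δ q (Sum.inl s)) q0) ∈ F)
    (hnonmem : ∀ x ∉ L, ∀ c : List γ,
      x.foldl (fun q s => δ q (Sum.inr s)) (c.foldl (fun q s => δ q (Sum.inl s)) q0) ∉ F) :
    ∃ (k : ℕ) (δ' : Fin m → α → Fin m) (F' : Finset (Fin m)) (SI : Finset (Fin m)),
      k ≤ m ∧ SI.card = k ∧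
      L = { x : List α | ∃ s ∈ SI, x.foldl δ' s ∈ F' } := by
  classical
  set SI : Finset (Fin m) :=
    Finset.univ.filter (fun q => ∃ c : List γ, c.foldl (fun q s => δ q (Sum.inl s)) q0 = q)
  refine ⟨SI.card, fun q a => δ q (Sum.inr a), F, SI, ?_, rfl, ?_⟩
  · simpa using Finset.card_le_card (Finset.subset_univ SI)
  · ext x
    simp only [Set.mem_setOf_eq]
    constructor
    · intro hx
      obtain ⟨c, hc⟩ := hmem x hx
      exact ⟨_, Finset.mem_filter.mpr ⟨Finset.mem_univ _, c, rfl⟩, hc⟩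
    · rintro ⟨s, hs, hf⟩
      obtain ⟨-, c, rfl⟩ := Finset.mem_filter.mp hs
      by_contra hx
      exact hnonmem x hx c hf
end

section
/- If a language L over a finite alphabet Σ is recognized by a k-entry DFA with m states, then L is verified by an MA-DFA with m+1 states; moreover the certificate alphabet can be taken to be the state set of the k-entry DFA and certificates of length 1 suffice for all member strings. -/
/-- If `L` is recognized by a `k`-entry DFA with `m` states, then `L` is verified
by an MA-DFA with `m+1` states whose certificate alphabet is the state set `Fin m` of the
`k`-entry DFA, with certificates of length 1 sufficing for all member strings. -/
theorem kentry_dfa_to_madfa {α : Type} [Fintype α] {m k : ℕ}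
    (δ : Fin m → α → Fin m) (SI : Finset (Fin m)) (hcard : SI.card = k)
    (F : Finset (Fin m)) (L : Set (List α))
    (hrec : ∀ x : List α, x ∈ L ↔ ∃ s ∈ SI, x.foldl δ s ∈ F) :
    ∃ (δ' : Fin (m + 1) → Fin m ⊕ α → Fin (m + 1)) (q0 : Fin (m + 1))
      (F' : Finset (Fin (m + 1))),
      (∀ x ∈ L, ∃ c : List (Fin m), c.length = 1 ∧
        x.foldl (fun q s => δ' q (Sum.inr s)) (c.foldl (fun q s => δ' q (Sum.inl s)) q0) ∈ F') ∧
      (∀ x ∉ L, ∀ c : List (Fin m),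
        x.foldl (fun q s => δ' q (Sum.inr s)) (c.foldl (fun q s => δ' q (Sum.inl s)) q0) ∉ F') := by
  classical
  -- δ' : state m+1 acts as start/dead state.
  set δ' : Fin (m + 1) → Fin m ⊕ α → Fin (m + 1) := fun q i =>
    if hq : q = Fin.last m then
      match i with
      | Sum.inl s => if s ∈ SI then Fin.castSucc s else Fin.last m
      | Sum.inr _ => Fin.last m
    else
      match i with
      | Sum.inl _ => q
      | Sum.inr a => Fin.castSucc (δ (q.castPred hq) a)
    with hδ'
  -- key lemma: input run from castSucc s simulates δ
  have hrun : ∀ (x : List α) (s : Fin m),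
      x.foldl (fun q i => δ' q (Sum.inr i)) (Fin.castSucc s) = Fin.castSucc (x.foldl δ s) := by
    intro x
    induction x with
    | nil => intro s; rfl
    | cons a x ih =>
      intro s
      simp only [List.foldl_cons]
      have h1 : δ' (Fin.castSucc s) (Sum.inr a) = Fin.castSucc (δ s a) := by
        rw [hδ']
        have : Fin.castSucc s ≠ Fin.last m := Fin.castSucc_lt_last s |>.ne
        simp [this]
      rw [h1, ih]
  -- dead state stays dead on input
  have hdead : ∀ (x : List α),
      x.foldl (fun q i => δ' q (Sum.inr i)) (Fin.last m) = Fin.last m := by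
    intro x
    induction x with
    | nil => rfl
    | cons a x ih =>
      simp only [List.foldl_cons]
      have h1 : δ' (Fin.last m) (Sum.inr a) = Fin.last m := by rw [hδ']; simp
      rw [h1, ih]
  -- invariant for certificate runs
  have hcert : ∀ (c : List (Fin m)) (q : Fin (m + 1)),
      (q = Fin.last m ∨ ∃ s ∈ SI, q = Fin.castSucc s) →
      (c.foldl (fun q i => δ' q (Sum.inl i)) q = Fin.last m ∨
        ∃ s ∈ SI, c.foldl (fun q i => δ' q (Sum.inl i)) q = Fin.castSucc s) := by
    intro c
    induction c with
    | nil => intro q hq; exact hq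
    | cons t c ih =>
      intro q hq
      simp only [List.foldl_cons]
      apply ih
      rcases hq with hq | ⟨s, hs, hq⟩
      · subst hq
        rw [hδ']
        simp only [dif_pos]
        by_cases ht : t ∈ SI
        · exact Or.inr ⟨t, ht, by simp [ht]⟩
        · simp [ht]
      · subst hq
        rw [hδ']
        have : Fin.castSucc s ≠ Fin.last m := Fin.castSucc_lt_last s |>.ne
        simp only [dif_neg this]
        exact Or.inr ⟨s, hs, rfl⟩
  refine ⟨δ', Fin.last m, F.image Fin.castSucc, ?_, ?_⟩
  · intro x hx
    obtain ⟨s, hs, hf⟩ := (hrec x).mp hx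
    refine ⟨[s], rfl, ?_⟩
    have h1 : ([s] : List (Fin m)).foldl (fun q i => δ' q (Sum.inl i)) (Fin.last m)
        = Fin.castSucc s := by
      simp only [List.foldl_cons, List.foldl_nil]
      rw [hδ']; simp [hs]
    rw [h1, hrun]
    exact Finset.mem_image_of_mem _ hf
  · intro x hx c
    rcases hcert c (Fin.last m) (Or.inl rfl) with h | ⟨s, hs, h⟩
    · rw [h, hdead]
      intro hmem
      obtain ⟨t, _, ht⟩ := Finset.mem_image.mp hmem
      exact (Fin.castSucc_lt_last t).ne ht
    · rw [h, hrun]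
      intro hmem
      obtain ⟨t, htF, ht⟩ := Finset.mem_image.mp hmem
      have := Fin.castSucc_injective m ht
      subst this
      exact hx ((hrec x).mpr ⟨s, hs, htF⟩)
end

section
/- There exists a unary MA-PFA M (for some number of states m) that verifies the language USQUARE = { a^(i²) : i ≥ 0 } with cutpoint 1/2 using certificates of length √n for members: for every i ≥ 0, Acc(i, i²) > 1/2, and for every n that is not a perfect square and every i ≥ 0, Acc(i, n) ≤ 1/2. -/
open Matrix

/-- A column-stochastic real matrix: nonnegative entries, every column sums to 1. -/
def ColStochastic {m : ℕ} (A : Matrix (Fin m) (Fin m) ℝ) : Prop :=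
  (∀ i j, 0 ≤ A i j) ∧ ∀ j, ∑ i, A i j = 1

/-- The first standard basis column vector `e₁`. -/
def e1 (m : ℕ) : Fin m → ℝ := fun j => if j.val = 0 then 1 else 0

/-- Acceptance probability of a unary MA-PFA with transition matrices
`Ao` (◐), `Aa` (letter a), `Acl` (◑), `Ace` (¢), `Ad` ($) and accepting states `F`,
on certificate `a^i` and input `a^n`. -/
noncomputable def pfaAcc {m : ℕ} (Ao Aa Acl Ace Ad : Matrix (Fin m) (Fin m) ℝ)
    (F : Finset (Fin m)) (i n : ℕ) : ℝ :=
  ∑ j ∈ F, (Ad * Aa ^ n * Ace * Acl * Aa ^ i * Ao).mulVec (e1 m) j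

noncomputable def Ma : Matrix (Fin 16) (Fin 16) ℝ := Matrix.of fun x j =>
  if j.val = 0 then (if x.val = 0 then (1/2:ℝ) else (if x.val = 1 then (1/2:ℝ) else (0:ℝ))) else if j.val = 1 then (if x.val = 1 then (1/2:ℝ) else (if x.val = 2 then (1/2:ℝ) else (0:ℝ))) else if j.val = 2 then (if x.val = 2 then (1/2:ℝ) else (if x.val = 3 then (1/2:ℝ) else (0:ℝ))) else if j.val = 3 then (if x.val = 3 then (1/2:ℝ) else (if x.val = 4 then (1/2:ℝ) else (0:ℝ))) else if j.val = 4 then (if x.val = 4 then (1/2:ℝ) else (if x.val = 14 then (1/2:ℝ) else (0:ℝ))) else if j.val = 5 then (if x.val = 5 then (1/2:ℝ) else (if x.val = 6 then (1/2:ℝ) else (0:ℝ))) else if j.val = 6 then (if x.val = 6 then (1/2:ℝ) else (if x.val = 7 then (1/2:ℝ) else (0:ℝ))) else if j.val = 7 then (if x.val = 7 then (1/2:ℝ) else (if x.val = 14 then (1/2:ℝ) else (0:ℝ))) else if j.val = 8 then (if x.val = 8 then (1/2:ℝ) else (if x.val = 9 then (1/2:ℝ) else (0:ℝ))) else if j.val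 = 9 then (if x.val = 9 then (1/2:ℝ) else (if x.val = 14 then (1/2:ℝ) else (0:ℝ))) else if j.val = 10 then (if x.val = 10 then (1/2:ℝ) else (if x.val = 11 then (1/2:ℝ) else (0:ℝ))) else if j.val = 11 then (if x.val = 11 then (1/2:ℝ) else (if x.val = 14 then (1/2:ℝ) else (0:ℝ))) else if j.val = 12 then (if x.val = 12 then (1/2:ℝ) else (if x.val = 14 then (1/2:ℝ) else (0:ℝ))) else if j.val = 13 then (if x.val = 13 then (1/2:ℝ) else (if x.val = 14 then (1/2:ℝ) else (0:ℝ))) else if j.val = 14 then (if x.val = 14 then (1:ℝ) else (0:ℝ)) else if j.val = 15 then (if x.val = 15 then (1:ℝ) else (0:ℝ)) else (0:ℝ)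

noncomputable def Mcl : Matrix (Fin 16) (Fin 16) ℝ := Matrix.of fun x j =>
  if j.val = 0 then (if x.val = 5 then (1:ℝ) else (0:ℝ)) else if j.val = 1 then (if x.val = 8 then (1:ℝ) else (0:ℝ)) else if j.val = 2 then (if x.val = 10 then (1:ℝ) else (0:ℝ)) else if j.val = 3 then (if x.val = 12 then (1:ℝ) else (0:ℝ)) else if j.val = 4 then (if x.val = 13 then (1:ℝ) else (0:ℝ)) else if j.val = 5 then (if x.val = 14 then (1:ℝ) else (0:ℝ)) else if j.val = 6 then (if x.val = 14 then (1:ℝ) else (0:ℝ)) else if j.val = 7 then (if x.val = 14 then (1:ℝ) else (0:ℝ)) else if j.val = 8 then (if x.val = 14 then (1:ℝ) else (0:ℝ)) else if j.val = 9 then (if x.val = 14 then (1:ℝ) else (0:ℝ)) else if j.val = 10 then (if x.val = 14 then (1:ℝ) else (0:ℝ)) else if j.val = 11 then (if x.val = 14 then (1:ℝ) else (0:ℝ)) else if j.val = 12 then (if x.val = 14 then (1:ℝ) else (0:ℝ)) else if j.val = 13 then (if x.val = 14 then (1:ℝ) else (0:ℝ)) else if j.val = 14 then (if x.val = 14 then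 (1:ℝ) else (0:ℝ)) else if j.val = 15 then (if x.val = 14 then (1:ℝ) else (0:ℝ)) else (0:ℝ)

noncomputable def Md : Matrix (Fin 16) (Fin 16) ℝ := Matrix.of fun x j =>
  if j.val = 0 then (if x.val = 14 then (1/2:ℝ) else (if x.val = 15 then (1/2:ℝ) else (0:ℝ))) else if j.val = 1 then (if x.val = 14 then (1/2:ℝ) else (if x.val = 15 then (1/2:ℝ) else (0:ℝ))) else if j.val = 2 then (if x.val = 14 then (1/2:ℝ) else (if x.val = 15 then (1/2:ℝ) else (0:ℝ))) else if j.val = 3 then (if x.val = 14 then (1/2:ℝ) else (if x.val = 15 then (1/2:ℝ) else (0:ℝ))) else if j.val = 4 then (if x.val = 14 then (1/2:ℝ) else (if x.val = 15 then (1/2:ℝ) else (0:ℝ))) else if j.val = 5 then (if x.val = 14 then (35/72:ℝ) else (if x.val = 15 then (37/72:ℝ) else (0:ℝ))) else if j.val = 6 then (if x.val = 14 then (37/72:ℝ) else (if x.val = 15 then (35/72:ℝ) else (0:ℝ))) else if j.val = 7 then (if x.val = 14 then (19/36:ℝ) else (if x.val = 15 then (17/36:ℝ) else (0:ℝ)))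 else if j.val = 8 then (if x.val = 14 then (37/72:ℝ) else (if x.val = 15 then (35/72:ℝ) else (0:ℝ))) else if j.val = 9 then (if x.val = 14 then (17/36:ℝ) else (if x.val = 15 then (19/36:ℝ) else (0:ℝ))) else if j.val = 10 then (if x.val = 14 then (25/36:ℝ) else (if x.val = 15 then (11/36:ℝ) else (0:ℝ))) else if j.val = 11 then (if x.val = 14 then (4/9:ℝ) else (if x.val = 15 then (5/9:ℝ) else (0:ℝ))) else if j.val = 12 then (if x.val = 14 then (1:ℝ) else (0:ℝ)) else if j.val = 13 then (if x.val = 14 then (5/6:ℝ) else (if x.val = 15 then (1/6:ℝ) else (0:ℝ))) else if j.val = 14 then (if x.val = 14 then (1/2:ℝ) else (if x.val = 15 then (1/2:ℝ) else (0:ℝ))) else if j.val = 15 then (if x.val = 14 then (1/2:ℝ) else (if x.val = 15 then (1/2:ℝ) else (0:ℝ))) else (0:ℝ)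

noncomputable def vc (i : ℕ) : Fin 16 → ℝ := fun x =>
  if x.val = 0 then ((i.choose 0 : ℕ) : ℝ)/2^i else if x.val = 1 then ((i.choose 1 : ℕ) : ℝ)/2^i else if x.val = 2 then ((i.choose 2 : ℕ) : ℝ)/2^i else if x.val = 3 then ((i.choose 3 : ℕ) : ℝ)/2^i else if x.val = 4 then ((i.choose 4 : ℕ) : ℝ)/2^i else if x.val = 14 then 1 - (((i.choose 0 : ℕ) : ℝ) + ((i.choose 1 : ℕ) : ℝ) + ((i.choose 2 : ℕ) : ℝ) + ((i.choose 3 : ℕ) : ℝ) + ((i.choose 4 : ℕ) : ℝ))/2^i else (0:ℝ)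

noncomputable def vin (i n : ℕ) : Fin 16 → ℝ := fun x =>
  if x.val = 5 then ((i.choose 0 : ℕ) : ℝ) * ((n.choose 0 : ℕ) : ℝ)/2^(i+n) else if x.val = 6 then ((i.choose 0 : ℕ) : ℝ) * ((n.choose 1 : ℕ) : ℝ)/2^(i+n) else if x.val = 7 then ((i.choose 0 : ℕ) : ℝ) * ((n.choose 2 : ℕ) : ℝ)/2^(i+n) else if x.val = 8 then ((i.choose 1 : ℕ) : ℝ) * ((n.choose 0 : ℕ) : ℝ)/2^(i+n) else if x.val = 9 then ((i.choose 1 : ℕ) : ℝ) * ((n.choose 1 : ℕ) : ℝ)/2^(i+n) else if x.val = 10 then ((i.choose 2 : ℕ) : ℝ) * ((n.choose 0 : ℕ) : ℝ)/2^(i+n) else if x.val = 11 then ((i.choose 2 : ℕ) : ℝ) * ((n.choose 1 : ℕ) : ℝ)/2^(i+n) else if x.val = 12 then ((i.choose 3 : ℕ) : ℝ) * ((n.choose 0 : ℕ) : ℝ)/2^(i+n) else if x.val = 13 then ((i.choose 4 : ℕ) : ℝ) * ((n.choose 0 : ℕ) : ℝ)/2^(i+n) else if x.val = 14 then 1 -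 (((i.choose 0 : ℕ) : ℝ) * ((n.choose 0 : ℕ) : ℝ) + ((i.choose 0 : ℕ) : ℝ) * ((n.choose 1 : ℕ) : ℝ) + ((i.choose 0 : ℕ) : ℝ) * ((n.choose 2 : ℕ) : ℝ) + ((i.choose 1 : ℕ) : ℝ) * ((n.choose 0 : ℕ) : ℝ) + ((i.choose 1 : ℕ) : ℝ) * ((n.choose 1 : ℕ) : ℝ) + ((i.choose 2 : ℕ) : ℝ) * ((n.choose 0 : ℕ) : ℝ) + ((i.choose 2 : ℕ) : ℝ) * ((n.choose 1 : ℕ) : ℝ) + ((i.choose 3 : ℕ) : ℝ) * ((n.choose 0 : ℕ) : ℝ) + ((i.choose 4 : ℕ) : ℝ) * ((n.choose 0 : ℕ) : ℝ))/2^(i+n) else (0:ℝ)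


set_option maxHeartbeats 1000000 in
lemma vc_zero : vc 0 = e1 16 := by
  funext x
  fin_cases x <;> norm_num [vc, e1]

set_option maxHeartbeats 2000000 in
lemma vc_succ (i : ℕ) : Ma.mulVec (vc i) = vc (i + 1) := by
  funext x
  fin_cases x <;>
    simp (config := { decide := true }) [Ma, vc, Matrix.mulVec, dotProduct,
      Fin.sum_univ_succ, Nat.choose_succ_succ, pow_succ] <;>
    push_cast <;> ring

lemma vc_eq (i : ℕ) : (Ma ^ i).mulVec (e1 16) = vc i := by
  induction i with
  | zero => simp [vc_zero]
  | succ k ih => rw [pow_succ', ← Matrix.mulVec_mulVec, ih, vc_succ]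

set_option maxHeartbeats 2000000 in
lemma vin_zero (i : ℕ) : Mcl.mulVec (vc i) = vin i 0 := by
  funext x
  fin_cases x <;>
    simp (config := { decide := true }) [Mcl, vc, vin, Matrix.mulVec, dotProduct,
      Fin.sum_univ_succ] <;>
    push_cast <;> ring

set_option maxHeartbeats 2000000 in
lemma vin_succ (i n : ℕ) : Ma.mulVec (vin i n) = vin i (n + 1) := by
  funext x
  fin_cases x <;>
    simp (config := { decide := true }) [Ma, vin, Matrix.mulVec, dotProduct,
      Fin.sum_univ_succ, Nat.choose_succ_succ, pow_succ] <;>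
    push_cast <;> ring

lemma vin_eq (i n : ℕ) : (Ma ^ n).mulVec (Mcl.mulVec (vc i)) = vin i n := by
  induction n with
  | zero => simp [vin_zero]
  | succ k ih => rw [pow_succ', ← Matrix.mulVec_mulVec, ih, vin_succ]

lemma choose2 (i : ℕ) : ((i.choose 2 : ℕ) : ℝ) = i * (i - 1) / 2 := by
  induction i with
  | zero => norm_num
  | succ k ih =>
      rw [Nat.choose_succ_succ, Nat.choose_one_right]
      push_cast
      rw [ih]
      ring

lemma choose3 (i : ℕ) : ((i.choose 3 : ℕ) : ℝ) = i * (i - 1) * (i - 2) / 6 := by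
  induction i with
  | zero => norm_num
  | succ k ih =>
      rw [Nat.choose_succ_succ]
      push_cast
      rw [ih, choose2]
      ring

lemma choose4 (i : ℕ) : ((i.choose 4 : ℕ) : ℝ) = i * (i - 1) * (i - 2) * (i - 3) / 24 := by
  induction i with
  | zero => norm_num
  | succ k ih =>
      rw [Nat.choose_succ_succ]
      push_cast
      rw [ih, choose3]
      ring

lemma one_colStochastic : ColStochastic (1 : Matrix (Fin 16) (Fin 16) ℝ) := by
  constructor
  · intro i j
    rw [Matrix.one_apply]
    split_ifs <;> norm_num
  · intro j
    simp [Matrix.one_apply]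

set_option maxHeartbeats 1000000 in
lemma Ma_colStochastic : ColStochastic Ma := by
  constructor
  · intro x j
    fin_cases j <;> simp (config := { decide := true }) [Ma] <;> split_ifs <;> norm_num
  · intro j
    fin_cases j <;>
      simp (config := { decide := true }) [Ma, Fin.sum_univ_succ] <;> norm_num

set_option maxHeartbeats 1000000 in
lemma Mcl_colStochastic : ColStochastic Mcl := by
  constructor
  · intro x j
    fin_cases j <;> simp (config := { decide := true }) [Mcl] <;> split_ifs <;> norm_num
  · intro j
    fin_cases j <;>
      simp (config := { decide := true }) [Mcl, Fin.sum_univ_succ] <;> norm_num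

set_option maxHeartbeats 1000000 in
lemma Md_colStochastic : ColStochastic Md := by
  constructor
  · intro x j
    fin_cases j <;> simp (config := { decide := true }) [Md] <;> split_ifs <;> norm_num
  · intro j
    fin_cases j <;>
      simp (config := { decide := true }) [Md, Fin.sum_univ_succ] <;> norm_num

set_option maxHeartbeats 1000000 in
lemma acc_formula (i n : ℕ) :
    pfaAcc 1 Ma Mcl 1 Md {(15 : Fin 16)} i n
      = 1/2 + (1 - ((n : ℝ) - (i : ℝ)^2)^2) / (72 * 2^(i+n)) := by
  have hT : (2 : ℝ)^(i+n) ≠ 0 := by positivity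
  rw [pfaAcc, Finset.sum_singleton, Matrix.mul_one, Matrix.mul_one]
  rw [← Matrix.mulVec_mulVec, vc_eq, ← Matrix.mulVec_mulVec, ← Matrix.mulVec_mulVec, vin_eq]
  simp (config := { decide := true }) [Md, vin, Matrix.mulVec, dotProduct,
    Fin.sum_univ_succ]
  rw [choose2 i, choose3 i, choose4 i, choose2 n]
  field_simp
  ring

/-- some unary MA-PFA verifies `USQUARE = { a^(i²) }` with cutpoint 1/2,
using certificates of length `√n` for members. -/
theorem mapfa_usquare :
    ∃ (m : ℕ) (Ao Aa Acl Ace Ad : Matrix (Fin m) (Fin m) ℝ) (F : Finset (Fin m)),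
      ColStochastic Ao ∧ ColStochastic Aa ∧ ColStochastic Acl ∧
      ColStochastic Ace ∧ ColStochastic Ad ∧
      (∀ i : ℕ, 1 / 2 < pfaAcc Ao Aa Acl Ace Ad F i (i ^ 2)) ∧
      (∀ n : ℕ, (¬ ∃ i : ℕ, n = i ^ 2) → ∀ i : ℕ,
        pfaAcc Ao Aa Acl Ace Ad F i n ≤ 1 / 2) := by
  refine ⟨16, 1, Ma, Mcl, 1, Md, {(15 : Fin 16)}, one_colStochastic, Ma_colStochastic,
    Mcl_colStochastic, one_colStochastic, Md_colStochastic, ?_, ?_⟩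
  · intro i
    rw [acc_formula]
    have h1 : ((i ^ 2 : ℕ) : ℝ) - (i : ℝ)^2 = 0 := by push_cast; ring
    rw [h1]
    have h2 : (0:ℝ) < (1 - 0^2) / (72 * 2^(i + i^2)) := by positivity
    linarith
  · intro n hn i
    rw [acc_formula]
    have hne : n ≠ i ^ 2 := fun h => hn ⟨i, h⟩
    have hsq : (1:ℝ) ≤ ((n : ℝ) - (i : ℝ)^2)^2 := by
      rcases lt_or_gt_of_ne hne with h | h
      · have : n + 1 ≤ i ^ 2 := h
        have : ((n:ℝ)) + 1 ≤ ((i:ℝ))^2 := by exact_mod_cast this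
        nlinarith
      · have : i ^ 2 + 1 ≤ n := h
        have : ((i:ℝ))^2 + 1 ≤ (n:ℝ) := by exact_mod_cast this
        nlinarith
    have hpos : (0:ℝ) < 72 * 2^(i+n) := by positivity
    have : (1 - ((n : ℝ) - (i : ℝ)^2)^2) / (72 * 2^(i+n)) ≤ 0 := by
      apply div_nonpos_of_nonpos_of_nonneg <;> nlinarith
    linarith
end

section
/- For every integer k > 2, there exists a unary MA-PFA M that verifies the language UPOLY(k) = { a^(i^k) : i ≥ 0 } with cutpoint 1/2 using certificates of length n^(1/k) for members: for every i ≥ 0, Acc(i, i^k) > 1/2, and for every n that is not a k-th power and every i ≥ 0, Acc(i, n) ≤ 1/2. -/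
/-!
A real-weighted automaton is turned into a stochastic one by `X ↦ J ⊗ J₂ + c • X ⊗ Q`, where `J`
and `J₂` are the uniform stochastic matrices and `Q = (1 - swap) / 2`. Since `J₂` and `Q` are
orthogonal idempotents, the map `X ↦ J ⊗ J₂ + X ⊗ Q` is multiplicative; the first summand is
column-stochastic, the second has zero column sums, so for small `c > 0` every image is
column-stochastic. Accepting on half of the states, the acceptance probability of a run becomes
`1/2` plus a positive multiple of its weight.

For `UPOLY(k)` the weights come from Pascal's matrix, which shifts the power vector `(x ^ c)_c`
to `((x + 1) ^ c)_c` and is lower triangular. The certificate `a^i` produces `(i ^ c)_c`, a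
substitution turns it into `(1, -i^k, i^(2k))` in the first three coordinates, the input `a^n`
shifts these to `(1, n - i^k, (n - i^k)^2)`, and the readout gives `1/2 - (n - i^k)^2`, which is
positive exactly when `n = i^k`.
-/

open Matrix

open scoped Kronecker

section WordMatrix

variable {κ R : Type*} [Fintype κ] [DecidableEq κ]

def wordMatrix [Semiring R] (Ao Aa Acl Ace Ad : Matrix κ κ R) (i n : ℕ) : Matrix κ κ R :=
  Ad * Aa ^ n * Ace * Acl * Aa ^ i * Ao

lemma wordMatrix_apply [Semiring R] (Ao Aa Acl Ace Ad : Matrix κ κ R) (i n : ℕ) (p s : κ) :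
    wordMatrix Ao Aa Acl Ace Ad i n p s =
      (Ad *ᵥ (Aa ^ n *ᵥ (Ace *ᵥ (Acl *ᵥ (Aa ^ i *ᵥ (Ao *ᵥ Pi.single s 1)))))) p := by
  simp only [mulVec_mulVec]
  rw [mulVec_single_one, col_apply]
  simp only [wordMatrix, mul_assoc]

lemma wordMatrix_smul [CommSemiring R] (Ao Aa Acl Ace Ad : Matrix κ κ R) (co ca ccl cce cd : R)
    (i n : ℕ) :
    wordMatrix (co • Ao) (ca • Aa) (ccl • Acl) (cce • Ace) (cd • Ad) i n =
      (cd * ca ^ n * cce * ccl * ca ^ i * co) • wordMatrix Ao Aa Acl Ace Ad i n := by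
  simp only [wordMatrix, smul_pow, smul_mul_assoc, mul_smul_comm, smul_smul]
  congr 1
  ring

end WordMatrix

section Reindex

variable {κ : Type*} [Fintype κ] {m : ℕ}

lemma colStochastic_reindex (e : κ ≃ Fin m) {A : Matrix κ κ ℝ} (h₀ : ∀ p q, 0 ≤ A p q)
    (h₁ : ∀ q, ∑ p, A p q = 1) : ColStochastic (reindex e e A) :=
  ⟨fun _ _ => h₀ _ _, fun j => (e.symm.sum_comp fun p => A p (e.symm j)).trans (h₁ _)⟩

lemma pfaAcc_reindex [DecidableEq κ] (e : κ ≃ Fin m) (Ao Aa Acl Ace Ad : Matrix κ κ ℝ)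
    (F : Finset κ) {s : κ} (hs : (e s).val = 0) (i n : ℕ) :
    pfaAcc (reindex e e Ao) (reindex e e Aa) (reindex e e Acl) (reindex e e Ace)
        (reindex e e Ad) (F.map e.toEmbedding) i n =
      ∑ p ∈ F, wordMatrix Ao Aa Acl Ace Ad i n p s := by
  have hword : reindex e e (wordMatrix Ao Aa Acl Ace Ad i n) =
      reindex e e Ad * reindex e e Aa ^ n * reindex e e Ace * reindex e e Acl *
        reindex e e Aa ^ i * reindex e e Ao := by
    simp only [wordMatrix, ← coe_reindexAlgEquiv ℝ ℝ, map_mul, map_pow]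
  have he1 (q : κ) : e1 m (e q) = Pi.single (M := fun _ => ℝ) s 1 q := by
    simp only [e1, Pi.single_apply, ← hs, Fin.val_inj, e.apply_eq_iff_eq]
  simp only [pfaAcc, ← hword, Finset.sum_map]
  refine Finset.sum_congr rfl fun p _ => ?_
  simp only [mulVec, dotProduct, reindex_apply, submatrix_apply, Equiv.coe_toEmbedding]
  rw [← e.sum_comp]
  simp [he1, Pi.single_apply]

end Reindex

section StochLift

variable {ι : Type*} [Fintype ι]

noncomputable def uniformMatrix (ι : Type*) [Fintype ι] : Matrix ι ι ℝ :=
  of fun _ _ => (Fintype.card ι : ℝ)⁻¹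

noncomputable def zeroSumProj : Matrix (Fin 2) (Fin 2) ℝ := !![1 / 2, -1 / 2; -1 / 2, 1 / 2]

lemma uniformMatrix_mul_self [Nonempty ι] :
    uniformMatrix ι * uniformMatrix ι = uniformMatrix ι := by
  ext p q
  simp [uniformMatrix, mul_apply]

lemma uniformMatrix_mul_zeroSumProj : uniformMatrix (Fin 2) * zeroSumProj = 0 := by
  ext p q
  fin_cases p <;> fin_cases q <;> simp [uniformMatrix, zeroSumProj, mul_apply] <;> norm_num

lemma zeroSumProj_mul_uniformMatrix : zeroSumProj * uniformMatrix (Fin 2) = 0 := by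
  ext p q
  fin_cases p <;> fin_cases q <;> simp [uniformMatrix, zeroSumProj, mul_apply] <;> norm_num

lemma zeroSumProj_mul_self : zeroSumProj * zeroSumProj = zeroSumProj := by
  ext p q
  fin_cases p <;> fin_cases q <;> simp [zeroSumProj, mul_apply] <;> norm_num

lemma sum_zeroSumProj_apply (b : Fin 2) : ∑ a, zeroSumProj a b = 0 := by
  fin_cases b <;> simp [zeroSumProj] <;> norm_num

noncomputable def stochLift (X : Matrix ι ι ℝ) : Matrix (ι × Fin 2) (ι × Fin 2) ℝ :=
  uniformMatrix ι ⊗ₖ uniformMatrix (Fin 2) + X ⊗ₖ zeroSumProj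

lemma stochLift_mul [Nonempty ι] (X Y : Matrix ι ι ℝ) :
    stochLift X * stochLift Y = stochLift (X * Y) := by
  simp only [stochLift, add_mul, mul_add, ← mul_kronecker_mul, uniformMatrix_mul_self,
    uniformMatrix_mul_zeroSumProj, zeroSumProj_mul_uniformMatrix, zeroSumProj_mul_self,
    kronecker_zero, add_zero, zero_add]

lemma stochLift_mul_pow [DecidableEq ι] [Nonempty ι] (X Y : Matrix ι ι ℝ) (n : ℕ) :
    stochLift X * stochLift Y ^ n = stochLift (X * Y ^ n) := by
  induction n with
  | zero => simp
  | succ n ih => rw [pow_succ, ← mul_assoc, ih, stochLift_mul, pow_succ, mul_assoc]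

lemma wordMatrix_stochLift [DecidableEq ι] [Nonempty ι] (Go Ga Gcl Gce Gd : Matrix ι ι ℝ)
    (i n : ℕ) :
    wordMatrix (stochLift Go) (stochLift Ga) (stochLift Gcl) (stochLift Gce) (stochLift Gd) i n =
      stochLift (wordMatrix Go Ga Gcl Gce Gd i n) := by
  simp only [wordMatrix, stochLift_mul_pow, stochLift_mul]

lemma sum_stochLift_apply [Nonempty ι] (X : Matrix ι ι ℝ) (q : ι × Fin 2) :
    ∑ p, stochLift X p q = 1 := by
  have hQ := sum_zeroSumProj_apply q.2
  rw [Fin.sum_univ_two] at hQ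
  simp [stochLift, Fintype.sum_prod_type, Finset.sum_add_distrib, ← Finset.mul_sum,
    uniformMatrix, hQ]
  field_simp

lemma exists_pos_stochLift_smul_nonneg [Nonempty ι] (X : Matrix ι ι ℝ) :
    ∃ c : ℝ, 0 < c ∧ ∀ p q, 0 ≤ stochLift (c • X) p q := by
  obtain ⟨B, hB⟩ := (Set.finite_range fun pq : ι × ι => |X pq.1 pq.2|).bddAbove
  have hcard : (0 : ℝ) < Fintype.card ι := by exact_mod_cast Fintype.card_pos
  set c := ((Fintype.card ι : ℝ) * (|B| + 1))⁻¹ with hc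
  have hc0 : 0 < c := by positivity
  refine ⟨c, hc0, fun ⟨a, b⟩ ⟨a', b'⟩ => ?_⟩
  have hcX : |c * X a a'| ≤ (Fintype.card ι : ℝ)⁻¹ := by
    have hXB : |X a a'| ≤ |B| + 1 := (hB ⟨(a, a'), rfl⟩).trans (by linarith [le_abs_self B])
    calc |c * X a a'| = c * |X a a'| := by rw [abs_mul, abs_of_pos hc0]
      _ ≤ c * (|B| + 1) := by gcongr
      _ = (Fintype.card ι : ℝ)⁻¹ := by rw [hc]; field_simp
  obtain ⟨hlo, hhi⟩ := abs_le.mp hcX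
  fin_cases b <;> fin_cases b' <;> simp [stochLift, uniformMatrix, zeroSumProj] <;> linarith

lemma sum_stochLift_apply_mk_zero [Nonempty ι] (X : Matrix ι ι ℝ) (s : ι) :
    ∑ a, stochLift X (a, 0) (s, 0) = 1 / 2 + (1 / 2) * ∑ a, X a s := by
  simp [stochLift, uniformMatrix, zeroSumProj, Finset.sum_add_distrib, ← Finset.sum_mul]
  field_simp

end StochLift

theorem exists_pfa_acc_eq_half_add_weight {N : ℕ} [NeZero N]
    (Go Ga Gcl Gce Gd : Matrix (Fin N) (Fin N) ℝ) :
    ∃ (Ao Aa Acl Ace Ad : Matrix (Fin (N * 2)) (Fin (N * 2)) ℝ) (F : Finset (Fin (N * 2))),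
      ColStochastic Ao ∧ ColStochastic Aa ∧ ColStochastic Acl ∧
      ColStochastic Ace ∧ ColStochastic Ad ∧
      ∀ i n : ℕ, ∃ s : ℝ, 0 < s ∧
        pfaAcc Ao Aa Acl Ace Ad F i n = 1 / 2 + s * ∑ a, wordMatrix Go Ga Gcl Gce Gd i n a 0 := by
  have hlift (G : Matrix (Fin N) (Fin N) ℝ) : ∃ c : ℝ, 0 < c ∧
      ColStochastic (reindex finProdFinEquiv finProdFinEquiv (stochLift (c • G))) := by
    obtain ⟨c, hc, hnonneg⟩ := exists_pos_stochLift_smul_nonneg G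
    exact ⟨c, hc, colStochastic_reindex _ hnonneg (sum_stochLift_apply _)⟩
  obtain ⟨co, hco, ho⟩ := hlift Go
  obtain ⟨ca, hca, ha⟩ := hlift Ga
  obtain ⟨ccl, hccl, hcl⟩ := hlift Gcl
  obtain ⟨cce, hcce, hce⟩ := hlift Gce
  obtain ⟨cd, hcd, hd⟩ := hlift Gd
  refine ⟨_, _, _, _, _, (Finset.univ ×ˢ {0}).map finProdFinEquiv.toEmbedding, ho, ha, hcl, hce,
    hd, fun i n => ⟨(cd * ca ^ n * cce * ccl * ca ^ i * co) / 2, by positivity, ?_⟩⟩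
  rw [pfaAcc_reindex _ _ _ _ _ _ _ (s := (0, 0)) (by simp), Finset.sum_product]
  simp only [Finset.sum_singleton, wordMatrix_stochLift, wordMatrix_smul,
    sum_stochLift_apply_mk_zero, Matrix.smul_apply, smul_eq_mul, ← Finset.mul_sum]
  ring

section Pascal

variable {N : ℕ}

def pascal (N : ℕ) : Matrix (Fin N) (Fin N) ℝ := of fun r c => (r.val.choose c.val : ℝ)

lemma pascal_mulVec_apply_of_le {r₀ : ℕ} {x : ℝ} {w : Fin N → ℝ}
    (hw : ∀ c : Fin N, c.val ≤ r₀ → w c = x ^ c.val) {r : Fin N} (hr : r.val ≤ r₀) :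
    (pascal N *ᵥ w) r = (x + 1) ^ r.val := by
  have hterm (c : Fin N) : pascal N r c * w c = (r.val.choose c.val : ℝ) * x ^ c.val := by
    rcases le_or_gt c.val r.val with hc | hc
    · rw [pascal, of_apply, hw c (hc.trans hr)]
    · simp [pascal, Nat.choose_eq_zero_of_lt hc]
  rw [mulVec, dotProduct, Finset.sum_congr rfl fun c _ => hterm c,
    Fin.sum_univ_eq_sum_range (fun t => (r.val.choose t : ℝ) * x ^ t),
    ← Finset.sum_subset (Finset.range_subset_range.mpr r.isLt) fun t _ ht => by
      simp [Nat.choose_eq_zero_of_lt (Nat.lt_of_not_le (by simpa [Nat.lt_succ_iff] using ht))],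
    add_pow]
  exact Finset.sum_congr rfl fun t _ => by ring

lemma pascal_pow_mulVec_apply_of_le {r₀ : ℕ} {x : ℝ} {w : Fin N → ℝ}
    (hw : ∀ c : Fin N, c.val ≤ r₀ → w c = x ^ c.val) (n : ℕ) {r : Fin N} (hr : r.val ≤ r₀) :
    (pascal N ^ n *ᵥ w) r = (x + n) ^ r.val := by
  induction n generalizing r with
  | zero => simp [hw r hr]
  | succ n ih =>
    rw [pow_succ', ← mulVec_mulVec, pascal_mulVec_apply_of_le (fun c hc => ih hc) hr]
    push_cast
    ring

def powSubst (N k : ℕ) : Matrix (Fin N) (Fin N) ℝ :=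
  of fun r c => if c.val = k * r.val then (-1) ^ r.val else 0

lemma powSubst_mulVec_apply (k : ℕ) (x : ℝ) {r : Fin N} (hr : k * r.val < N) :
    (powSubst N k *ᵥ fun c => x ^ c.val) r = (-x ^ k) ^ r.val := by
  rw [mulVec, dotProduct, Finset.sum_eq_single_of_mem ⟨k * r.val, hr⟩ (Finset.mem_univ _)
    fun c _ hc => by simp [powSubst, show c.val ≠ k * r.val from fun h => hc (Fin.ext h)]]
  rw [neg_pow, ← pow_mul]
  simp [powSubst]

end Pascal

noncomputable def upolyReadout (k : ℕ) : Matrix (Fin (2 * k + 3)) (Fin (2 * k + 3)) ℝ :=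
  diagonal (Pi.single 0 (1 / 2) - Pi.single 2 1)

lemma sum_wordMatrix_upoly_apply (k i n : ℕ) :
    ∑ a, wordMatrix 1 (pascal _) (powSubst _ k) 1 (upolyReadout k) i n a 0 =
      1 / 2 - ((n : ℝ) - (i : ℝ) ^ k) ^ 2 := by
  have hstart (c : Fin (2 * k + 3)) : (Pi.single 0 1 : Fin (2 * k + 3) → ℝ) c = 0 ^ c.val := by
    rcases eq_or_ne c 0 with rfl | hc
    · simp
    · simp [hc, zero_pow (Fin.val_ne_zero_iff.mpr hc)]
  have hcert : pascal (2 * k + 3) ^ i *ᵥ Pi.single 0 1 = fun c => (i : ℝ) ^ c.val := by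
    funext c
    simpa using pascal_pow_mulVec_apply_of_le (fun c _ => hstart c) i c.isLt.le
  have hinput (r : Fin (2 * k + 3)) (hr : r.val ≤ 2) :
      (pascal _ ^ n *ᵥ (powSubst _ k *ᵥ (pascal _ ^ i *ᵥ Pi.single 0 1))) r =
        ((n : ℝ) - (i : ℝ) ^ k) ^ r.val := by
    rw [hcert, pascal_pow_mulVec_apply_of_le
      (fun c hc => powSubst_mulVec_apply k _ (by nlinarith)) n hr]
    ring
  have h2 : ((2 : Fin (2 * k + 3)) : ℕ) = 2 := by simp
  simp only [wordMatrix_apply, one_mulVec, upolyReadout, mulVec_diagonal, Pi.sub_apply, sub_mul,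
    Finset.sum_sub_distrib, Pi.single_apply, ite_mul, zero_mul, Finset.sum_ite_eq',
    Finset.mem_univ, if_true, hinput 0 (by simp), hinput 2 h2.le, h2]
  simp

lemma one_le_sq_natCast_sub_of_ne {a b : ℕ} (h : a ≠ b) : 1 ≤ ((a : ℝ) - b) ^ 2 := by
  rcases h.lt_or_gt with h | h
  · have : (a : ℝ) + 1 ≤ b := by exact_mod_cast h
    nlinarith
  · have : (b : ℝ) + 1 ≤ a := by exact_mod_cast h
    nlinarith

theorem mapfa_upoly_general (k : ℕ) :
    ∃ (m : ℕ) (Ao Aa Acl Ace Ad : Matrix (Fin m) (Fin m) ℝ) (F : Finset (Fin m)),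
      ColStochastic Ao ∧ ColStochastic Aa ∧ ColStochastic Acl ∧
      ColStochastic Ace ∧ ColStochastic Ad ∧
      (∀ i : ℕ, 1 / 2 < pfaAcc Ao Aa Acl Ace Ad F i (i ^ k)) ∧
      (∀ n : ℕ, (¬ ∃ i : ℕ, n = i ^ k) → ∀ i : ℕ,
        pfaAcc Ao Aa Acl Ace Ad F i n ≤ 1 / 2) := by
  obtain ⟨Ao, Aa, Acl, Ace, Ad, F, ho, ha, hcl, hce, hd, hacc⟩ :=
    exists_pfa_acc_eq_half_add_weight 1 (pascal _) (powSubst _ k) 1 (upolyReadout k)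
  refine ⟨_, Ao, Aa, Acl, Ace, Ad, F, ho, ha, hcl, hce, hd, fun i => ?_, fun n hn i => ?_⟩
  · obtain ⟨s, hs, heq⟩ := hacc i (i ^ k)
    rw [heq, sum_wordMatrix_upoly_apply]
    push_cast
    linarith
  · obtain ⟨s, hs, heq⟩ := hacc i n
    have hgap := one_le_sq_natCast_sub_of_ne fun h => hn ⟨i, h⟩
    push_cast at hgap
    rw [heq, sum_wordMatrix_upoly_apply]
    nlinarith

/-- for every `k > 2`, some unary MA-PFA verifies `UPOLY(k) = { a^(i^k) }`
with cutpoint 1/2, using certificates of length `n^(1/k)` for members. -/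
theorem mapfa_upoly (k : ℕ) (hk : 2 < k) :
    ∃ (m : ℕ) (Ao Aa Acl Ace Ad : Matrix (Fin m) (Fin m) ℝ) (F : Finset (Fin m)),
      ColStochastic Ao ∧ ColStochastic Aa ∧ ColStochastic Acl ∧
      ColStochastic Ace ∧ ColStochastic Ad ∧
      (∀ i : ℕ, 1 / 2 < pfaAcc Ao Aa Acl Ace Ad F i (i ^ k)) ∧
      (∀ n : ℕ, (¬ ∃ i : ℕ, n = i ^ k) → ∀ i : ℕ,
        pfaAcc Ao Aa Acl Ace Ad F i n ≤ 1 / 2) :=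
  mapfa_upoly_general k
end

section
/- For every ε with 0 < ε < 1/2 there exists a unary MA-PostQFA M (certificate and input alphabet both {a}) such that: a(c,x)+r(c,x) > 0 for all certificates and inputs; for every i ≥ 0, on certificate a^i and input a^(i²) the acceptance probability of M is 1; and for every n that is not a perfect square and every i ≥ 0, on certificate a^i and input a^n the rejection probability of M is at least 1−ε. Hence M verifies USQUARE = { a^(i²) : i ≥ 0 } with bounded error using certificates of length √n for members. -/
open Matrix

/-- A superoperator on `ℂ^m`: a finite family of `m×m` complex matrices `E_1,…,E_k`
with `∑ j, E_jᴴ E_j = I`. -/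
structure Superop (m : ℕ) where
  k : ℕ
  E : Fin k → Matrix (Fin m) (Fin m) ℂ
  valid : ∑ j, (E j)ᴴ * E j = 1

/-- Action of a superoperator on a density matrix: `ρ ↦ ∑ j, E_j ρ E_jᴴ`. -/
noncomputable def Superop.app {m : ℕ} (S : Superop m) (ρ : Matrix (Fin m) (Fin m) ℂ) :
    Matrix (Fin m) (Fin m) ℂ :=
  ∑ j, S.E j * ρ * (S.E j)ᴴ

/-- The initial density matrix `e₁ e₁†`. -/
def rho0 (m : ℕ) : Matrix (Fin m) (Fin m) ℂ :=
  Matrix.of fun j j' => if j.val = 0 ∧ j'.val = 0 then 1 else 0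

/-- An MA-PostQFA whose certificate and input symbols range over the type `Sym`:
superoperators for the markers `◐, ◑, ¢, $` and for each symbol, together with disjoint
sets of postselecting accepting and rejecting states. -/
structure MAPostQFA (Sym : Type) where
  m : ℕ
  Eopen : Superop m
  Eclose : Superop m
  Ecent : Superop m
  Edollar : Superop m
  Esym : Sym → Superop m
  Qacc : Finset (Fin m)
  Qrej : Finset (Fin m)
  disj : Disjoint Qacc Qrej

namespace MAPostQFA

variable {Sym : Type}

/-- The final density matrix on certificate `c` and input `x`: apply
`E_◐, E_{c_1}, …, E_{c_k}, E_◑, E_¢, E_{x_1}, …, E_{x_l}, E_$` in order to `ρ₀`. -/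
noncomputable def finalRho (M : MAPostQFA Sym) (c x : List Sym) : Matrix (Fin M.m) (Fin M.m) ℂ :=
  M.Edollar.app <|
    x.foldl (fun ρ s => (M.Esym s).app ρ) <|
      M.Ecent.app <| M.Eclose.app <|
        c.foldl (fun ρ s => (M.Esym s).app ρ) (M.Eopen.app (rho0 M.m))

/-- `a(c,x)`: total final weight on the postselecting accepting states. -/
noncomputable def aPr (M : MAPostQFA Sym) (c x : List Sym) : ℝ :=
  ∑ j ∈ M.Qacc, (M.finalRho c x j j).re

/-- `r(c,x)`: total final weight on the postselecting rejecting states. -/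
noncomputable def rPr (M : MAPostQFA Sym) (c x : List Sym) : ℝ :=
  ∑ j ∈ M.Qrej, (M.finalRho c x j j).re

/-- Acceptance probability `a/(a+r)` after postselection. -/
noncomputable def accProb (M : MAPostQFA Sym) (c x : List Sym) : ℝ :=
  M.aPr c x / (M.aPr c x + M.rPr c x)

/-- Rejection probability `r/(a+r)` after postselection. -/
noncomputable def rejProb (M : MAPostQFA Sym) (c x : List Sym) : ℝ :=
  M.rPr c x / (M.aPr c x + M.rPr c x)

end MAPostQFA

/-!
The automaton carries an unnormalised pure state on five visible coordinates of `ℂ⁹`; the other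
four coordinates only absorb what is needed to make each step a superoperator, and are never
observed. Every `a` scales the visible state by `1/4`. On the certificate `a^i` the visible
registers run through `(1, l, l²)`; `◑` turns `(1, i, i²)` into `(1, -i²)`, and each input symbol
adds the first entry to the second, ending at `(1, n - i²)`. At `$` these become the amplitudes
`√ε` and `n - i²` of the accepting and rejecting states, so `a = ε t` and `r = (n - i²)² t` with
`t = 16^-(i+n)`: for `n = i²` we get `r = 0`, and otherwise `r ≥ t`, so the rejection
probability is at least `1/(1 + ε) ≥ 1 - ε`.
-/

theorem Matrix.mul_vecMulVec_star_mul_conjTranspose {l n α : Type*} [Fintype n]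
    [CommSemiring α] [StarRing α] (M : Matrix l n α) (u : n → α) :
    M * vecMulVec u (star u) * Mᴴ = vecMulVec (M *ᵥ u) (star (M *ᵥ u)) := by
  rw [mul_vecMulVec, vecMulVec_mul, star_mulVec]

theorem Matrix.conjTranspose_smul_map_intCast_mul_self {n : Type*} [Fintype n] [DecidableEq n]
    (r : ℝ) (Z : Matrix n n ℤ) (D : n → ℤ) (hZ : Zᵀ * Z = diagonal D) :
    ((r : ℂ) • Z.map (Int.castRingHom ℂ))ᴴ * ((r : ℂ) • Z.map (Int.castRingHom ℂ)) =
      diagonal fun c => ((r ^ 2 * D c : ℝ) : ℂ) := by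
  rw [conjTranspose_smul, ← conjTranspose_map (Int.castRingHom ℂ) (fun z => by simp),
    conjTranspose_eq_transpose_of_trivial, smul_mul_smul, ← Matrix.map_mul, hZ,
    diagonal_map (map_zero _), ← diagonal_smul]
  congr 1
  ext c
  simp [Complex.conj_ofReal, sq]

def PureOn {m : ℕ} (P ρ : Matrix (Fin m) (Fin m) ℂ) (u : Fin m → ℂ) : Prop :=
  P * ρ * P = vecMulVec u (star u)

theorem rho0_eq_vecMulVec (m : ℕ) [NeZero m] :
    rho0 m = vecMulVec (Pi.single 0 1) (star (Pi.single 0 1)) := by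
  ext i j
  simp only [rho0, of_apply, vecMulVec_apply, Pi.star_apply, Pi.single_apply, Fin.val_eq_zero_iff]
  split_ifs <;> simp_all

section PureOn

variable {m : ℕ} {P ρ : Matrix (Fin m) (Fin m) ℂ} {u : Fin m → ℂ}

theorem pureOn_vecMulVec (hP : Pᴴ = P) (v : Fin m → ℂ) :
    PureOn P (vecMulVec v (star v)) (P *ᵥ v) := by
  unfold PureOn
  nth_rewrite 2 [← hP]
  exact mul_vecMulVec_star_mul_conjTranspose P v

theorem PureOn.apply_self_of_diagonal {p : Fin m → ℂ} (h : PureOn (diagonal p) ρ u) {i : Fin m}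
    (hi : p i = 1) : ρ i i = u i * star (u i) := by
  simpa [hi, vecMulVec_apply] using congr_fun (congr_fun h i) i

end PureOn

namespace Superop

variable {m : ℕ}

protected def id (m : ℕ) : Superop m where
  k := 1
  E := ![1]
  valid := by simp

@[simp]
theorem id_app (ρ : Matrix (Fin m) (Fin m) ℂ) : (Superop.id m).app ρ = ρ :=
  (Fin.sum_univ_one _).trans (by simp [Superop.id])

/-- The defect of `B` from an isometry is dumped, column by column, into the sink state `g`. -/
noncomputable def ofOrthogonal (B : Matrix (Fin m) (Fin m) ℂ) (d : Fin m → ℝ)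
    (hB : Bᴴ * B = diagonal fun c => (d c : ℂ)) (hd : ∀ c, d c ≤ 1) (g : Fin m) :
    Superop m where
  k := m + 1
  E := Fin.cons B fun c => single g c ((√(1 - d c) : ℝ) : ℂ)
  valid := by
    have hsink (c : Fin m) : (single g c ((√(1 - d c) : ℝ) : ℂ))ᴴ *
        single g c ((√(1 - d c) : ℝ) : ℂ) = single c c ((1 - d c : ℝ) : ℂ) := by
      rw [conjTranspose_single, single_mul_single_same, Complex.star_def, Complex.conj_ofReal,
        ← Complex.ofReal_mul, Real.mul_self_sqrt (sub_nonneg.2 (hd c))]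
    rw [Fin.sum_univ_succ]
    simp only [Fin.cons_zero, Fin.cons_succ, hsink, sum_single_eq_diagonal, hB, diagonal_add]
    rw [← diagonal_one]
    congr 1
    ext c
    push_cast
    ring

variable {B P ρ : Matrix (Fin m) (Fin m) ℂ} {d : Fin m → ℝ} {g : Fin m} {u : Fin m → ℂ}

theorem ofOrthogonal_app (hB : Bᴴ * B = diagonal fun c => (d c : ℂ)) (hd : ∀ c, d c ≤ 1) :
    (ofOrthogonal B d hB hd g).app ρ = B * ρ * Bᴴ +
      ∑ c, single g c ((√(1 - d c) : ℝ) : ℂ) * ρ * (single g c ((√(1 - d c) : ℝ) : ℂ))ᴴ :=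
  Fin.sum_univ_succ _

theorem pureOn_ofOrthogonal_app (hB : Bᴴ * B = diagonal fun c => (d c : ℂ))
    (hd : ∀ c, d c ≤ 1) (hP : Pᴴ = P) (hPg : ∀ i, P i g = 0) (hBP : B * P = B)
    (hρ : PureOn P ρ u) : PureOn P ((ofOrthogonal B d hB hd g).app ρ) ((P * B) *ᵥ u) := by
  have hsink (c : Fin m) (x : ℂ) : P * single g c x = 0 := by
    ext i j
    by_cases hj : j = c
    · simp [hj, mul_single_apply_same, hPg]
    · simp [mul_single_apply_of_ne (hbj := hj)]
  have hmain : P * (B * ρ * Bᴴ) * P = (P * B) * (P * ρ * P) * (P * B)ᴴ := by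
    conv_lhs => rw [← hBP, conjTranspose_mul, hP]
    simp only [conjTranspose_mul, hP, Matrix.mul_assoc]
  rw [PureOn, ofOrthogonal_app, Matrix.mul_add, Matrix.add_mul, Finset.mul_sum, Finset.sum_mul]
  simp only [← Matrix.mul_assoc P, hsink, Matrix.zero_mul, Finset.sum_const_zero, add_zero]
  rw [Matrix.mul_assoc P, Matrix.mul_assoc P, hmain, hρ, mul_vecMulVec_star_mul_conjTranspose]

theorem pureOn_foldl_replicate (S : Superop m) (v : ℕ → Fin m → ℂ)
    (hS : ∀ k ρ, PureOn P ρ (v k) → PureOn P (S.app ρ) (v (k + 1)))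
    (hρ : PureOn P ρ (v 0)) (l : ℕ) :
    PureOn P ((List.replicate l ()).foldl (fun ρ _ => S.app ρ) ρ) (v l) := by
  induction l with
  | zero => exact hρ
  | succ l ih =>
    rw [List.replicate_succ', List.foldl_append, List.foldl_cons, List.foldl_nil]
    exact hS l _ ih

end Superop

namespace MAPostQFA

variable {Sym : Type} {M : MAPostQFA Sym} {c x : List Sym} {p u : Fin M.m → ℂ}

theorem aPr_eq_sum_normSq (h : PureOn (diagonal p) (M.finalRho c x) u)
    (hp : ∀ j ∈ M.Qacc, p j = 1) : M.aPr c x = ∑ j ∈ M.Qacc, Complex.normSq (u j) :=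
  Finset.sum_congr rfl fun j hj => by
    rw [h.apply_self_of_diagonal (hp j hj), Complex.star_def, Complex.mul_conj, Complex.ofReal_re]

theorem rPr_eq_sum_normSq (h : PureOn (diagonal p) (M.finalRho c x) u)
    (hp : ∀ j ∈ M.Qrej, p j = 1) : M.rPr c x = ∑ j ∈ M.Qrej, Complex.normSq (u j) :=
  Finset.sum_congr rfl fun j hj => by
    rw [h.apply_self_of_diagonal (hp j hj), Complex.star_def, Complex.mul_conj, Complex.ofReal_re]

end MAPostQFA

namespace USquare

abbrev visible : Matrix (Fin 9) (Fin 9) ℂ := diagonal ![1, 1, 1, 1, 1, 0, 0, 0, 0]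

theorem visible_conjTranspose : visibleᴴ = visible := by
  rw [visible, diagonal_conjTranspose]
  congr 1
  ext i
  fin_cases i <;> simp

theorem visible_apply_sink (i : Fin 9) : visible i 8 = 0 := by
  fin_cases i <;> simp [visible]

/-- Rows `5`–`8` make the columns orthogonal, so that `stepMat` is a single Kraus operator. -/
def stepMatZ : Matrix (Fin 9) (Fin 9) ℤ := !![
  1,  0,  0, 0,  0, 0, 0, 0, 0;
  1,  1,  0, 0,  0, 0, 0, 0, 0;
  1,  2,  1, 0,  0, 0, 0, 0, 0;
  0,  0,  0, 1,  0, 0, 0, 0, 0;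
  0,  0,  0, 1,  1, 0, 0, 0, 0;
  3, -1,  0, 0,  0, 0, 0, 0, 0;
  1,  0, -1, 0,  0, 0, 0, 0, 0;
  0,  2, -1, 0,  0, 0, 0, 0, 0;
  0,  0,  0, 1, -1, 0, 0, 0, 0]

theorem stepMatZ_transpose_mul_self :
    stepMatZᵀ * stepMatZ = diagonal ![13, 10, 3, 3, 2, 0, 0, 0, 0] := by
  decide

noncomputable def stepMat : Matrix (Fin 9) (Fin 9) ℂ :=
  ((4⁻¹ : ℝ) : ℂ) • stepMatZ.map (Int.castRingHom ℂ)

def closeMat : Matrix (Fin 9) (Fin 9) ℂ := single 3 0 1 - single 4 2 1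

noncomputable def dollarMat (ε : ℝ) : Matrix (Fin 9) (Fin 9) ℂ :=
  single 0 3 (√ε : ℂ) + single 1 4 1

theorem closeMat_conjTranspose_mul_self : closeMatᴴ * closeMat =
    diagonal fun c => ((![1, 0, 1, 0, 0, 0, 0, 0, 0] c : ℝ) : ℂ) := by
  ext i j
  fin_cases i <;> fin_cases j <;> simp [closeMat, mul_apply, single]

theorem dollarMat_conjTranspose_mul_self {ε : ℝ} (hε : 0 ≤ ε) : (dollarMat ε)ᴴ * dollarMat ε =
    diagonal fun c => ((![0, 0, 0, ε, 1, 0, 0, 0, 0] c : ℝ) : ℂ) := by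
  ext i j
  fin_cases i <;> fin_cases j <;>
    simp [dollarMat, mul_apply, single, Complex.conj_ofReal, ← Complex.ofReal_mul, hε]

theorem stepMat_mul_visible : stepMat * visible = stepMat := by
  ext i j
  fin_cases i <;> fin_cases j <;> simp [stepMat, visible, stepMatZ]

theorem closeMat_mul_visible : closeMat * visible = closeMat := by
  ext i j
  fin_cases i <;> fin_cases j <;> simp [closeMat, visible, single]

theorem dollarMat_mul_visible (ε : ℝ) : dollarMat ε * visible = dollarMat ε := by
  ext i j
  fin_cases i <;> fin_cases j <;> simp [dollarMat, visible, single]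

theorem visible_mul_stepMat_mulVec (v : Fin 9 → ℂ) : (visible * stepMat) *ᵥ v =
    (4⁻¹ : ℂ) • ![v 0, v 0 + v 1, v 0 + 2 * v 1 + v 2, v 3, v 3 + v 4, 0, 0, 0, 0] := by
  ext i
  fin_cases i <;> simp [stepMat, visible, stepMatZ, mulVec, dotProduct, Fin.sum_univ_succ,
    mul_apply] <;> ring

theorem visible_mul_closeMat_mulVec (v : Fin 9 → ℂ) :
    (visible * closeMat) *ᵥ v = ![0, 0, 0, v 0, -v 2, 0, 0, 0, 0] := by
  ext i
  fin_cases i <;>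
    simp [closeMat, visible, mulVec, dotProduct, Fin.sum_univ_succ, mul_apply, single]

theorem visible_mul_dollarMat_mulVec (ε : ℝ) (v : Fin 9 → ℂ) :
    (visible * dollarMat ε) *ᵥ v = ![√ε * v 3, v 4, 0, 0, 0, 0, 0, 0, 0] := by
  ext i
  fin_cases i <;>
    simp [dollarMat, visible, mulVec, dotProduct, Fin.sum_univ_succ, mul_apply, single]

noncomputable def stepOp : Superop 9 :=
  .ofOrthogonal stepMat _
    (conjTranspose_smul_map_intCast_mul_self _ _ _ stepMatZ_transpose_mul_self)
    (fun c => by fin_cases c <;> norm_num) 8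

noncomputable def closeOp : Superop 9 :=
  .ofOrthogonal closeMat _ closeMat_conjTranspose_mul_self
    (fun c => by fin_cases c <;> norm_num) 8

noncomputable def dollarOp (ε : ℝ) (hε0 : 0 ≤ ε) (hε1 : ε ≤ 1) : Superop 9 :=
  .ofOrthogonal (dollarMat ε) _ (dollarMat_conjTranspose_mul_self hε0)
    (fun c => by fin_cases c <;> simp [hε1]) 8

noncomputable def qfa (ε : ℝ) (hε0 : 0 ≤ ε) (hε1 : ε ≤ 1) : MAPostQFA Unit where
  m := 9
  Eopen := .id 9
  Eclose := closeOp
  Ecent := .id 9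
  Edollar := dollarOp ε hε0 hε1
  Esym _ := stepOp
  Qacc := {0}
  Qrej := {1}
  disj := by decide

noncomputable def certVec (l : ℕ) : Fin 9 → ℂ :=
  (4⁻¹ : ℂ) ^ l • ![1, (l : ℂ), (l : ℂ) ^ 2, 0, 0, 0, 0, 0, 0]

noncomputable def inputVec (i n : ℕ) : Fin 9 → ℂ :=
  (4⁻¹ : ℂ) ^ (i + n) • ![0, 0, 0, 1, (n : ℂ) - (i : ℂ) ^ 2, 0, 0, 0, 0]

theorem pureOn_stepOp_app {ρ : Matrix (Fin 9) (Fin 9) ℂ} {u : Fin 9 → ℂ}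
    (h : PureOn visible ρ u) : PureOn visible (stepOp.app ρ) ((visible * stepMat) *ᵥ u) :=
  Superop.pureOn_ofOrthogonal_app _ _ visible_conjTranspose visible_apply_sink
    stepMat_mul_visible h

theorem pureOn_closeOp_app {ρ : Matrix (Fin 9) (Fin 9) ℂ} {u : Fin 9 → ℂ}
    (h : PureOn visible ρ u) : PureOn visible (closeOp.app ρ) ((visible * closeMat) *ᵥ u) :=
  Superop.pureOn_ofOrthogonal_app _ _ visible_conjTranspose visible_apply_sink
    closeMat_mul_visible h

theorem pureOn_dollarOp_app {ε : ℝ} (hε0 : 0 ≤ ε) (hε1 : ε ≤ 1)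
    {ρ : Matrix (Fin 9) (Fin 9) ℂ} {u : Fin 9 → ℂ} (h : PureOn visible ρ u) :
    PureOn visible ((dollarOp ε hε0 hε1).app ρ) ((visible * dollarMat ε) *ᵥ u) :=
  Superop.pureOn_ofOrthogonal_app _ _ visible_conjTranspose visible_apply_sink
    (dollarMat_mul_visible ε) h

theorem visible_mul_stepMat_mulVec_certVec (l : ℕ) :
    (visible * stepMat) *ᵥ certVec l = certVec (l + 1) := by
  rw [visible_mul_stepMat_mulVec]
  ext k
  fin_cases k <;> simp [certVec, pow_succ] <;> ring

theorem visible_mul_stepMat_mulVec_inputVec (i n : ℕ) :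
    (visible * stepMat) *ᵥ inputVec i n = inputVec i (n + 1) := by
  rw [visible_mul_stepMat_mulVec]
  ext k
  fin_cases k <;> simp [inputVec, pow_succ, ← add_assoc] <;> ring

theorem visible_mul_closeMat_mulVec_certVec (i : ℕ) :
    (visible * closeMat) *ᵥ certVec i = inputVec i 0 := by
  rw [visible_mul_closeMat_mulVec]
  ext k
  fin_cases k <;> simp [certVec, inputVec]

theorem pureOn_finalRho {ε : ℝ} (hε0 : 0 ≤ ε) (hε1 : ε ≤ 1) (i n : ℕ) :
    PureOn visible ((qfa ε hε0 hε1).finalRho (List.replicate i ()) (List.replicate n ()))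
      ((4⁻¹ : ℂ) ^ (i + n) • ![(√ε : ℂ), (n : ℂ) - (i : ℂ) ^ 2, 0, 0, 0, 0, 0, 0, 0]) := by
  have hcert : PureOn visible ((List.replicate i ()).foldl (fun ρ _ => stepOp.app ρ)
      ((Superop.id 9).app (rho0 9))) (certVec i) := by
    refine Superop.pureOn_foldl_replicate _ _ (fun k ρ h => ?_) ?_ i
    · simpa [visible_mul_stepMat_mulVec_certVec] using pureOn_stepOp_app h
    · rw [Superop.id_app, rho0_eq_vecMulVec]
      convert pureOn_vecMulVec visible_conjTranspose _ using 1
      ext k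
      fin_cases k <;> simp [certVec, visible]
  have hinput : PureOn visible ((List.replicate n ()).foldl (fun ρ _ => stepOp.app ρ)
      ((Superop.id 9).app (closeOp.app ((List.replicate i ()).foldl (fun ρ _ => stepOp.app ρ)
        ((Superop.id 9).app (rho0 9)))))) (inputVec i n) := by
    refine Superop.pureOn_foldl_replicate _ _ (fun k ρ h => ?_) ?_ n
    · simpa [visible_mul_stepMat_mulVec_inputVec] using pureOn_stepOp_app h
    · simpa [visible_mul_closeMat_mulVec_certVec] using pureOn_closeOp_app hcert
  have hout : (visible * dollarMat ε) *ᵥ inputVec i n =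
      (4⁻¹ : ℂ) ^ (i + n) • ![(√ε : ℂ), (n : ℂ) - (i : ℂ) ^ 2, 0, 0, 0, 0, 0, 0, 0] := by
    rw [visible_mul_dollarMat_mulVec]
    ext k
    fin_cases k <;> simp [inputVec, mul_comm]
  rw [← hout]
  exact pureOn_dollarOp_app hε0 hε1 hinput

theorem aPr_qfa {ε : ℝ} (hε0 : 0 ≤ ε) (hε1 : ε ≤ 1) (i n : ℕ) :
    (qfa ε hε0 hε1).aPr (List.replicate i ()) (List.replicate n ()) = ε * (16⁻¹) ^ (i + n) := by
  rw [MAPostQFA.aPr_eq_sum_normSq (pureOn_finalRho hε0 hε1 i n)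
    fun j hj => by rw [Finset.mem_singleton.1 hj]; rfl]
  simp [qfa, Complex.normSq_mul, hε0]
  ring

theorem rPr_qfa {ε : ℝ} (hε0 : 0 ≤ ε) (hε1 : ε ≤ 1) (i n : ℕ) :
    (qfa ε hε0 hε1).rPr (List.replicate i ()) (List.replicate n ()) =
      ((n : ℝ) - (i : ℝ) ^ 2) ^ 2 * (16⁻¹) ^ (i + n) := by
  rw [MAPostQFA.rPr_eq_sum_normSq (pureOn_finalRho hε0 hε1 i n)
    fun j hj => by rw [Finset.mem_singleton.1 hj]; rfl]
  have hreal : (n : ℂ) - (i : ℂ) ^ 2 = (((n : ℝ) - (i : ℝ) ^ 2 : ℝ) : ℂ) := by push_cast; rfl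
  simp [qfa, Complex.normSq_mul]
  rw [hreal, Complex.normSq_ofReal]
  ring

end USquare

theorem one_le_sub_sq_of_ne_sq {n i : ℕ} (h : n ≠ i ^ 2) : 1 ≤ ((n : ℝ) - (i : ℝ) ^ 2) ^ 2 := by
  have hz : (n : ℤ) - (i : ℤ) ^ 2 ≠ 0 := sub_ne_zero.2 (by exact_mod_cast h)
  exact_mod_cast (one_le_sq_iff_one_le_abs _).2 (Int.one_le_abs hz)

/-- for every `0 < ε < 1/2` there is a unary MA-PostQFA (certificate and input
alphabet `{a}`) that verifies `USQUARE` with bounded error, with certificates of length `√n`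
for members: postselection is always possible, members `a^(i²)` are accepted with probability
exactly 1 on certificate `a^i`, and non-members are rejected with probability `≥ 1−ε` on
every certificate. -/
theorem mapostqfa_usquare (ε : ℝ) (hε0 : 0 < ε) (hε : ε < 1 / 2) :
    ∃ M : MAPostQFA Unit,
      (∀ i n : ℕ,
        0 < M.aPr (List.replicate i ()) (List.replicate n ()) +
            M.rPr (List.replicate i ()) (List.replicate n ())) ∧
      (∀ i : ℕ, M.accProb (List.replicate i ()) (List.replicate (i ^ 2) ()) = 1) ∧
      (∀ n : ℕ, (¬ ∃ i : ℕ, n = i ^ 2) → ∀ i : ℕ,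
        1 - ε ≤ M.rejProb (List.replicate i ()) (List.replicate n ())) := by
  have hε1 : ε ≤ 1 := by linarith
  refine ⟨USquare.qfa ε hε0.le hε1, fun i n => ?_, fun i => ?_, fun n hn i => ?_⟩
  · rw [USquare.aPr_qfa, USquare.rPr_qfa]
    positivity
  · rw [MAPostQFA.accProb, USquare.aPr_qfa, USquare.rPr_qfa]
    simp [hε0.ne']
  · have hs := one_le_sub_sq_of_ne_sq fun h => hn ⟨i, h⟩
    have hεt : 0 ≤ ε * 16⁻¹ ^ (i + n) := by positivity
    rw [MAPostQFA.rejProb, USquare.aPr_qfa, USquare.rPr_qfa, le_div_iff₀ (by positivity)]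
    nlinarith [mul_nonneg hεt (sub_nonneg.2 hs), mul_nonneg hε0.le hεt]
end

section
/- For every ε with 0 < ε < 1/2 there exists a unary MA-PostQFA M such that: a(c,x)+r(c,x) > 0 for all certificates and inputs; for every i ≥ 0, on certificate a^i and input a^(2^i) the acceptance probability of M is at least 1−ε; and for every n that is not a power of 2 and every i ≥ 0, on certificate a^i and input a^n the rejection probability of M is at least 1−ε. Hence M verifies UPOWER = { a^(2^i) : i ≥ 0 } with bounded error using certificates of length log n for members. -/
open Matrix

/-!
The machine keeps a pure live state in the first of two 7-dimensional blocks; each Kraus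
completion dumps the lost amplitude into the second block, which is never read again, so the
postselection weights are squares of live amplitudes. Every certificate symbol halves an
amplitude, producing `2^(-i)`. On the input, the block `[[4/5, -3/20], [3/5, 1/5]]` of `symMat`
is a Jordan block for the eigenvalue `1/2`, so after `n` symbols it carries `n * 2^(-(i+n))`
beside a plain `2^(-n)`, and the end marker subtracts the two: the rejecting amplitude is
`(3/5) 2^(-(i+n+1)) (n - 2^i)` while the accepting one is `ε 2^(-(i+n+1))`. The common factor
cancels under postselection, so members are accepted with certainty, and for non-members
`|n - 2^i| ≥ 1` makes the rejecting weight at least `9 / (25 ε²)` times the accepting one.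
-/

namespace Superop

variable {u : ℕ}

/-- The first block holds the live state, the second collects discarded amplitude. -/
def blockEquiv (u : ℕ) :
    Matrix (Fin u ⊕ Fin u) (Fin u ⊕ Fin u) ℂ ≃ₐ[ℂ] Matrix (Fin (u + u)) (Fin (u + u)) ℂ :=
  reindexAlgEquiv ℂ ℂ finSumFinEquiv

lemma blockEquiv_conjTranspose (M : Matrix (Fin u ⊕ Fin u) (Fin u ⊕ Fin u) ℂ) :
    (blockEquiv u M)ᴴ = blockEquiv u Mᴴ :=
  conjTranspose_reindex _ _ _

def ofContraction (A B : Matrix (Fin u) (Fin u) ℂ) (h : Aᴴ * A + Bᴴ * B = 1) :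
    Superop (u + u) where
  k := 3
  E := ![blockEquiv u (fromBlocks A 0 0 0), blockEquiv u (fromBlocks 0 0 B 0),
    blockEquiv u (fromBlocks 0 0 0 1)]
  valid := by
    simp only [Fin.sum_univ_three, cons_val_zero, cons_val_one, cons_val_two, head_cons,
      tail_cons, blockEquiv_conjTranspose, ← map_mul, ← map_add, fromBlocks_conjTranspose,
      fromBlocks_multiply, fromBlocks_add]
    simp [h, ← fromBlocks_one]

lemma app_ofContraction (A B : Matrix (Fin u) (Fin u) ℂ) (h : Aᴴ * A + Bᴴ * B = 1)
    (P T : Matrix (Fin u) (Fin u) ℂ) :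
    (ofContraction A B h).app (blockEquiv u (fromBlocks P 0 0 T)) =
      blockEquiv u (fromBlocks (A * P * Aᴴ) 0 0 (B * P * Bᴴ + T)) := by
  change ∑ j : Fin 3, _ = _
  simp only [ofContraction, Fin.sum_univ_three, cons_val_zero, cons_val_one, cons_val_two,
    head_cons, tail_cons, blockEquiv_conjTranspose, ← map_mul, ← map_add,
    fromBlocks_conjTranspose, fromBlocks_multiply, fromBlocks_add]
  simp

def IsPureOn (ρ : Matrix (Fin (u + u)) (Fin (u + u)) ℂ) (w : Fin u → ℂ) : Prop :=
  ∃ T, ρ = blockEquiv u (fromBlocks (vecMulVec w (star w)) 0 0 T)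

lemma IsPureOn.app_ofContraction {A B : Matrix (Fin u) (Fin u) ℂ} {h : Aᴴ * A + Bᴴ * B = 1}
    {ρ : Matrix (Fin (u + u)) (Fin (u + u)) ℂ} {w : Fin u → ℂ} (hρ : IsPureOn ρ w) :
    IsPureOn ((ofContraction A B h).app ρ) (A *ᵥ w) := by
  obtain ⟨T, rfl⟩ := hρ
  exact ⟨_, by rw [Superop.app_ofContraction, mul_vecMulVec, vecMulVec_mul, star_mulVec]⟩

lemma isPureOn_rho0 (u : ℕ) :
    IsPureOn (rho0 (u + 1 + (u + 1))) ((↑) ∘ (Pi.single 0 1 : Fin (u + 1) → ℝ)) := by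
  refine ⟨0, ?_⟩
  ext i j
  obtain ⟨i | i, rfl⟩ := finSumFinEquiv.surjective i <;>
  obtain ⟨j | j, rfl⟩ := finSumFinEquiv.surjective j <;>
  simp only [blockEquiv, coe_reindexAlgEquiv, reindex_apply, submatrix_apply,
    Equiv.symm_apply_apply] <;>
  simp only [rho0, of_apply, fromBlocks_apply₁₁, fromBlocks_apply₁₂, fromBlocks_apply₂₁,
    fromBlocks_apply₂₂, finSumFinEquiv_apply_left, finSumFinEquiv_apply_right, Fin.val_castAdd,
    Fin.val_natAdd, vecMulVec_apply, Pi.star_apply, Matrix.zero_apply]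
  all_goals by_cases hi : i = 0 <;> by_cases hj : j = 0 <;> simp [hi, hj, Fin.val_eq_zero_iff]

lemma IsPureOn.re_apply_castAdd {ρ : Matrix (Fin (u + u)) (Fin (u + u)) ℂ} {w : Fin u → ℂ}
    (hρ : IsPureOn ρ w) (j : Fin u) :
    (ρ (Fin.castAdd u j) (Fin.castAdd u j)).re = ‖w j‖ ^ 2 := by
  obtain ⟨T, rfl⟩ := hρ
  simp [blockEquiv, vecMulVec_apply, Complex.mul_conj, Complex.normSq_eq_norm_sq]
  norm_cast

noncomputable def ofRealOrthogonal (A : Matrix (Fin u) (Fin u) ℝ) (d : Fin u → ℝ)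
    (hA : Aᵀ * A = diagonal d) (hd : ∀ j, d j ≤ 1) : Superop (u + u) :=
  ofContraction (A.map (↑)) ((diagonal fun j => √(1 - d j)).map (↑)) <| by
    have key :
        Aᵀ * A + (diagonal fun j => √(1 - d j))ᵀ * (diagonal fun j => √(1 - d j)) = 1 := by
      rw [hA, diagonal_transpose, diagonal_mul_diagonal, diagonal_add, ← diagonal_one]
      congr 1
      ext j
      rw [Real.mul_self_sqrt (sub_nonneg.2 (hd j))]
      ring
    have hconj (M : Matrix (Fin u) (Fin u) ℝ) : (M.map ((↑) : ℝ → ℂ))ᴴ = Mᵀ.map (↑) := by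
      ext i j; simp
    have := congrArg Complex.ofRealHom.mapMatrix key
    simp only [map_add, map_mul, map_one, RingHom.mapMatrix_apply] at this
    rwa [hconj, hconj]

lemma IsPureOn.app_ofRealOrthogonal {A : Matrix (Fin u) (Fin u) ℝ} {d : Fin u → ℝ}
    {hA : Aᵀ * A = diagonal d} {hd : ∀ j, d j ≤ 1}
    {ρ : Matrix (Fin (u + u)) (Fin (u + u)) ℂ} {v : Fin u → ℝ} (hρ : IsPureOn ρ ((↑) ∘ v)) :
    IsPureOn ((ofRealOrthogonal A d hA hd).app ρ) ((↑) ∘ (A *ᵥ v)) := by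
  have hmap : A.map (↑) *ᵥ ((↑) ∘ v) = ((↑) ∘ (A *ᵥ v) : Fin u → ℂ) :=
    funext fun i => (RingHom.map_mulVec Complex.ofRealHom A v i).symm
  exact hmap ▸ hρ.app_ofContraction

lemma IsPureOn.foldl_replicate_ofRealOrthogonal {α : Type*} {A : Matrix (Fin u) (Fin u) ℝ}
    {d : Fin u → ℝ} {hA : Aᵀ * A = diagonal d} {hd : ∀ j, d j ≤ 1} (v : ℕ → Fin u → ℝ)
    (hv : ∀ k, A *ᵥ v k = v (k + 1)) (n : ℕ) (a : α) {ρ : Matrix (Fin (u + u)) (Fin (u + u)) ℂ}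
    (hρ : IsPureOn ρ ((↑) ∘ v 0)) :
    IsPureOn ((List.replicate n a).foldl (fun ρ _ => (ofRealOrthogonal A d hA hd).app ρ) ρ)
      ((↑) ∘ v n) := by
  induction n generalizing v ρ with
  | zero => exact hρ
  | succ n ih =>
    refine ih (fun k => v (k + 1)) (fun k => hv (k + 1)) ?_
    simpa [hv 0] using hρ.app_ofRealOrthogonal (hA := hA) (hd := hd)

end Superop

namespace UPower

open Superop

noncomputable section

def startMat (g : ℝ) : Matrix (Fin 7) (Fin 7) ℝ :=
  !![1/2, 0, 0, 0, 0, 0, 0;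
     1/2, 0, 0, 0, 0, 0, 0;
     g/2, 0, 0, 0, 0, 0, 0;
     0, 0, 0, 0, 0, 0, 0;
     0, 0, 0, 0, 0, 0, 0;
     0, 0, 0, 0, 0, 0, 0;
     0, 0, 0, 0, 0, 0, 0]

def symMat : Matrix (Fin 7) (Fin 7) ℝ :=
  !![1, 0, 0, 0, 0, 0, 0;
     0, 1/2, 0, 0, 0, 0, 0;
     0, 0, 1/2, 0, 0, 0, 0;
     0, 0, 0, 1/2, 0, 0, 0;
     0, 0, 0, 0, 4/5, -3/20, 0;
     0, 0, 0, 0, 3/5, 1/5, 0;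
     0, 0, 0, 0, 0, 0, 1/2]

def switchMat : Matrix (Fin 7) (Fin 7) ℝ :=
  !![0, 0, 0, 0, 0, 0, 0;
     0, 0, 0, 0, 0, 0, 0;
     0, 0, 0, 0, 0, 0, 0;
     1, 0, 0, 0, 0, 0, 0;
     0, 1, 0, 0, 0, 0, 0;
     0, 0, 0, 0, 0, 0, 0;
     0, 0, 1, 0, 0, 0, 0]

def endMat : Matrix (Fin 7) (Fin 7) ℝ :=
  !![0, 0, 0, 0, 0, 0, 0;
     0, 0, 0, 0, 0, 0, 0;
     0, 0, 0, 0, 0, 0, 0;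
     0, 0, 0, 0, 0, 0, 0;
     0, 0, 0, 3/5, 0, 1/2, 0;
     0, 0, 0, -3/5, 0, 1/2, 0;
     0, 0, 0, 0, 0, 0, 1]

lemma startMat_transpose_mul_self (g : ℝ) :
    (startMat g)ᵀ * startMat g = diagonal ![1/2 + g^2/4, 0, 0, 0, 0, 0, 0] := by
  ext i j
  fin_cases i <;> fin_cases j <;> simp [startMat, mul_apply, Fin.sum_univ_succ]
  ring

lemma symMat_transpose_mul_self :
    symMatᵀ * symMat = diagonal ![1, 1/4, 1/4, 1/4, 1, 1/16, 1/4] := by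
  ext i j
  fin_cases i <;> fin_cases j <;> simp [symMat, mul_apply, Fin.sum_univ_succ]
  all_goals norm_num

lemma switchMat_transpose_mul_self : switchMatᵀ * switchMat = diagonal ![1, 1, 1, 0, 0, 0, 0] := by
  ext i j
  fin_cases i <;> fin_cases j <;> simp [switchMat, mul_apply, Fin.sum_univ_succ]

lemma endMat_transpose_mul_self : endMatᵀ * endMat = diagonal ![0, 0, 0, 18/25, 0, 1/2, 1] := by
  ext i j
  fin_cases i <;> fin_cases j <;> simp [endMat, mul_apply, Fin.sum_univ_succ]
  all_goals norm_num

def certVec (g : ℝ) (k : ℕ) : Fin 7 → ℝ := ![1/2, (1/2)^(k+1), g * (1/2)^(k+1), 0, 0, 0, 0]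

def inputVec (g : ℝ) (i n : ℕ) : Fin 7 → ℝ :=
  ![0, 0, 0, (1/2)^(n+1), (1/2)^(i+n+1) * (1 + 3/5 * n), (1/2)^(i+n+1) * (6/5 * n),
    g * (1/2)^(i+n+1)]

lemma startMat_mulVec_single (g : ℝ) : startMat g *ᵥ Pi.single 0 1 = certVec g 0 := by
  ext j
  fin_cases j <;>
    simp [startMat, certVec, mulVec, dotProduct, Fin.sum_univ_succ, div_eq_mul_inv]

lemma symMat_mulVec_certVec (g : ℝ) (k : ℕ) : symMat *ᵥ certVec g k = certVec g (k + 1) := by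
  ext j
  fin_cases j <;> simp [symMat, certVec, mulVec, dotProduct, Fin.sum_univ_succ] <;> ring

lemma switchMat_mulVec_certVec (g : ℝ) (i : ℕ) :
    switchMat *ᵥ certVec g i = inputVec g i 0 := by
  ext j
  fin_cases j <;> simp [switchMat, certVec, inputVec, mulVec, dotProduct, Fin.sum_univ_succ]

lemma symMat_mulVec_inputVec (g : ℝ) (i n : ℕ) :
    symMat *ᵥ inputVec g i n = inputVec g i (n + 1) := by
  ext j
  fin_cases j <;> simp [symMat, inputVec, mulVec, dotProduct, Fin.sum_univ_succ] <;> ring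

lemma endMat_mulVec_inputVec_five (g : ℝ) (i n : ℕ) :
    (endMat *ᵥ inputVec g i n) 5 = 3/5 * (1/2)^(i+n+1) * (n - 2^i) := by
  simp [endMat, inputVec, mulVec, dotProduct, Fin.sum_univ_succ]
  field_simp
  ring

lemma endMat_mulVec_inputVec_six (g : ℝ) (i n : ℕ) :
    (endMat *ᵥ inputVec g i n) 6 = g * (1/2)^(i+n+1) := by
  simp [endMat, inputVec, mulVec, dotProduct, Fin.sum_univ_succ]

def machine (g : ℝ) (hg : g ^ 2 ≤ 2) : MAPostQFA Unit where
  m := 7 + 7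
  Eopen := .ofRealOrthogonal (startMat g) _ (startMat_transpose_mul_self g) <| by
    simp [Fin.forall_fin_succ]; linarith
  Eclose := .ofRealOrthogonal switchMat _ switchMat_transpose_mul_self <| by
    simp [Fin.forall_fin_succ]
  Ecent := .ofRealOrthogonal 1 1 (by simp) (by simp)
  Edollar := .ofRealOrthogonal endMat _ endMat_transpose_mul_self <| by
    simp [Fin.forall_fin_succ]; norm_num
  Esym _ := .ofRealOrthogonal symMat _ symMat_transpose_mul_self <| by
    simp [Fin.forall_fin_succ]; norm_num
  Qacc := {Fin.castAdd 7 6}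
  Qrej := {Fin.castAdd 7 5}
  disj := by decide

lemma isPureOn_finalRho (g : ℝ) (hg : g ^ 2 ≤ 2) (i n : ℕ) :
    IsPureOn ((machine g hg).finalRho (.replicate i ()) (.replicate n ()))
      ((↑) ∘ (endMat *ᵥ inputVec g i n)) := by
  simp only [MAPostQFA.finalRho, machine]
  refine IsPureOn.app_ofRealOrthogonal ?_
  refine IsPureOn.foldl_replicate_ofRealOrthogonal (inputVec g i) (symMat_mulVec_inputVec g i)
    n () ?_
  rw [← switchMat_mulVec_certVec, ← one_mulVec (switchMat *ᵥ certVec g i)]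
  refine IsPureOn.app_ofRealOrthogonal (IsPureOn.app_ofRealOrthogonal ?_)
  refine IsPureOn.foldl_replicate_ofRealOrthogonal (certVec g) (symMat_mulVec_certVec g) i () ?_
  rw [← startMat_mulVec_single]
  exact (isPureOn_rho0 6).app_ofRealOrthogonal

lemma re_finalRho_castAdd (g : ℝ) (hg : g ^ 2 ≤ 2) (i n : ℕ) (j : Fin 7) :
    ((machine g hg).finalRho (.replicate i ()) (.replicate n ()) (Fin.castAdd 7 j)
      (Fin.castAdd 7 j)).re = (endMat *ᵥ inputVec g i n) j ^ 2 := by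
  rw [(isPureOn_finalRho g hg i n).re_apply_castAdd, Function.comp_apply, Complex.norm_real,
    Real.norm_eq_abs, sq_abs]

lemma aPr_machine (g : ℝ) (hg : g ^ 2 ≤ 2) (i n : ℕ) :
    (machine g hg).aPr (.replicate i ()) (.replicate n ()) = (g * (1/2)^(i+n+1)) ^ 2 := by
  rw [← endMat_mulVec_inputVec_six, ← re_finalRho_castAdd]
  exact Finset.sum_singleton _ _

lemma rPr_machine (g : ℝ) (hg : g ^ 2 ≤ 2) (i n : ℕ) :
    (machine g hg).rPr (.replicate i ()) (.replicate n ()) =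
      (3/5 * (1/2)^(i+n+1) * (n - 2^i)) ^ 2 := by
  rw [← endMat_mulVec_inputVec_five, ← re_finalRho_castAdd]
  exact Finset.sum_singleton _ _

lemma aPr_add_rPr_machine_pos {g : ℝ} (hg0 : 0 < g) (hg : g ^ 2 ≤ 2) (i n : ℕ) :
    0 < (machine g hg).aPr (.replicate i ()) (.replicate n ()) +
      (machine g hg).rPr (.replicate i ()) (.replicate n ()) := by
  rw [aPr_machine, rPr_machine]
  positivity

lemma accProb_machine_two_pow {g : ℝ} (hg0 : 0 < g) (hg : g ^ 2 ≤ 2) (i : ℕ) :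
    (machine g hg).accProb (.replicate i ()) (.replicate (2 ^ i) ()) = 1 := by
  rw [MAPostQFA.accProb, rPr_machine, Nat.cast_pow, Nat.cast_ofNat, sub_self, mul_zero,
    zero_pow two_ne_zero, add_zero, div_self (by rw [aPr_machine]; positivity)]

lemma one_sub_le_rejProb_machine {ε : ℝ} (hε : 0 < ε) (hg : ε ^ 2 ≤ 2) {i n : ℕ}
    (hn : n ≠ 2 ^ i) :
    1 - ε ≤ (machine ε hg).rejProb (.replicate i ()) (.replicate n ()) := by
  have hD : 1 ≤ ((n : ℝ) - 2 ^ i) ^ 2 := by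
    have : (n : ℤ) - 2 ^ i ≠ 0 := sub_ne_zero.2 (by exact_mod_cast hn)
    exact_mod_cast (one_le_sq_iff_one_le_abs _).2 (Int.one_le_abs this)
  rw [MAPostQFA.rejProb, aPr_machine, rPr_machine, le_div_iff₀ (by positivity)]
  nlinarith [mul_nonneg (mul_nonneg hε.le (sq_nonneg ((1/2 : ℝ) ^ (i + n + 1))))
    (show 0 ≤ 9/25 * ((n : ℝ) - 2 ^ i) ^ 2 - (1 - ε) * ε by nlinarith [sq_nonneg (1 - 2 * ε)])]

end

end UPower

/-- for every `0 < ε < 1/2` there is a unary MA-PostQFA verifying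
`UPOWER = { a^(2^i) }` with bounded error, using certificates of length `log n` for
members. -/
theorem mapostqfa_upower (ε : ℝ) (hε0 : 0 < ε) (hε : ε < 1 / 2) :
    ∃ M : MAPostQFA Unit,
      (∀ i n : ℕ,
        0 < M.aPr (List.replicate i ()) (List.replicate n ()) +
            M.rPr (List.replicate i ()) (List.replicate n ())) ∧
      (∀ i : ℕ, 1 - ε ≤ M.accProb (List.replicate i ()) (List.replicate (2 ^ i) ())) ∧
      (∀ n : ℕ, (¬ ∃ i : ℕ, n = 2 ^ i) → ∀ i : ℕ,
        1 - ε ≤ M.rejProb (List.replicate i ()) (List.replicate n ())) := by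
  have hg : ε ^ 2 ≤ 2 := by nlinarith
  refine ⟨UPower.machine ε hg, UPower.aPr_add_rPr_machine_pos hε0 hg, fun i => ?_,
    fun n hn i => UPower.one_sub_le_rejProb_machine hε0 hg fun h => hn ⟨i, h⟩⟩
  rw [UPower.accProb_machine_two_pow hε0 hg]
  linarith
end
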